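/- Let X be the set of all bi-infinite sequences x ∈ {0,1,2}^ℤ such that either x_n ∈ {0,1} for all n ∈ ℤ or x_n ∈ {0,2} for all n ∈ ℤ, equipped with the metric d(x,y) = Σ_{n∈ℤ} 2^{−|n|} χ(x_n, y_n), where χ(a,b) = 0 if a = b and 1 if a ≠ b, and let S : X → X be the left shift homeomorphism, S(x)_n = x_{n+1}. Then (X, d, S) is not a Smale space: there exist no constants ε_X > 0, ε_X' > 0 and 0 < λ < 1 satisfying conditions (1), (2) and (3) of the definition of a Smale space. -/
import Mathlib


open Function

/-- `X = Σ_{0,1} ∪ Σ_{0,2}`: bi-infinite sequences in `{0,1,2}` omitting the symbol `2`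
or omitting the symbol `1`. -/
abbrev XShift : Type :=
  {x : ℤ → Fin 3 // (∀ n : ℤ, x n ≠ 2) ∨ (∀ n : ℤ, x n ≠ 1)}

/-- The metric `d(x,y) = Σ_{n ∈ ℤ} 2^{-|n|} χ(x_n, y_n)`. -/
noncomputable def dX (x y : XShift) : ℝ :=
  ∑' n : ℤ, (2 : ℝ)⁻¹ ^ n.natAbs * (if x.1 n = y.1 n then 0 else 1)

/-- The left shift `S` on `X`. -/
def Sf (x : XShift) : XShift :=
  ⟨fun n => x.1 (n + 1), x.2.imp (fun h n => h (n + 1)) (fun h n => h (n + 1))⟩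

/-- The inverse `S⁻¹` of the left shift on `X`. -/
def Sb (x : XShift) : XShift :=
  ⟨fun n => x.1 (n - 1), x.2.imp (fun h n => h (n - 1)) (fun h n => h (n - 1))⟩

lemma summable_w : Summable (fun n : ℤ => (2:ℝ)⁻¹ ^ n.natAbs) := by
  apply Summable.of_nat_of_neg <;>
    simpa using summable_geometric_of_lt_one (by norm_num) (by norm_num : (2:ℝ)⁻¹ < 1)

lemma summable_dX (x y : XShift) :
    Summable (fun n : ℤ => (2:ℝ)⁻¹ ^ n.natAbs * (if x.1 n = y.1 n then 0 else 1)) := by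
  apply Summable.of_nonneg_of_le _ _ summable_w
  · intro n; positivity
  · intro n
    rcases eq_or_ne (x.1 n) (y.1 n) with h | h <;> simp [h]

lemma term_le_dX (x y : XShift) (k : ℤ) :
    (2:ℝ)⁻¹ ^ k.natAbs * (if x.1 k = y.1 k then 0 else 1) ≤ dX x y :=
  Summable.le_tsum (summable_dX x y) k (fun j _ => by positivity)

lemma dX_eq_single (x y : XShift) (k : ℤ) (h : ∀ n, n ≠ k → x.1 n = y.1 n) :
    dX x y = (2:ℝ)⁻¹ ^ k.natAbs * (if x.1 k = y.1 k then 0 else 1) := by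
  unfold dX
  apply tsum_eq_single
  intro b hb
  simp [h b hb]

lemma dX_eq_zero (x y : XShift) (h : ∀ n, x.1 n = y.1 n) : dX x y = 0 := by
  rw [dX_eq_single x y 0 (fun n _ => h n)]
  simp [h 0]

lemma fin02 : (0 : Fin 3) ≠ 2 := by decide
lemma fin12 : (1 : Fin 3) ≠ 2 := by decide
lemma fin01 : (0 : Fin 3) ≠ 1 := by decide
lemma fin21 : (2 : Fin 3) ≠ 1 := by decide

lemma sf_iter (n : ℕ) (x : XShift) (m : ℤ) : (Sf^[n] x).1 m = x.1 (m + n) := by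
  induction n generalizing x with
  | zero => simp
  | succ k ih =>
    rw [Function.iterate_succ_apply, ih (Sf x)]
    show x.1 (m + k + 1) = x.1 (m + (k + 1 : ℕ))
    push_cast
    ring_nf

lemma sb_iter (n : ℕ) (x : XShift) (m : ℤ) : (Sb^[n] x).1 m = x.1 (m - n) := by
  induction n generalizing x with
  | zero => simp
  | succ k ih =>
    rw [Function.iterate_succ_apply, ih (Sb x)]
    show x.1 (m - k - 1) = x.1 (m - (k + 1 : ℕ))
    push_cast
    ring_nf


/-- Example 2: the union of the two-sided shifts on `{0,1}` and on `{0,2}` with the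
left shift is not a Smale space: no constants `ε_X, ε_X', λ` satisfy conditions
(1), (2), (3) of the definition of a Smale space. -/
theorem stmt19 :
    ¬∃ εX εX' lam : ℝ, 0 < εX ∧ 0 < εX' ∧ 0 < lam ∧ lam < 1 ∧
      (∀ (x y z : XShift) (n : ℕ),
        (∀ m : ℕ, dX (Sf^[m] x) (Sf^[m] y) ≤ εX') →
        (∀ m : ℕ, dX (Sf^[m] x) (Sf^[m] z) ≤ εX') →
        dX (Sf^[n] y) (Sf^[n] z) ≤ lam ^ n * dX y z) ∧
      (∀ (x y z : XShift) (n : ℕ),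
        (∀ m : ℕ, dX (Sb^[m] x) (Sb^[m] y) ≤ εX') →
        (∀ m : ℕ, dX (Sb^[m] x) (Sb^[m] z) ≤ εX') →
        dX (Sb^[n] y) (Sb^[n] z) ≤ lam ^ n * dX y z) ∧
      (∀ x y : XShift, dX x y ≤ εX →
        ∃! z : XShift, (∀ n : ℕ, dX (Sf^[n] x) (Sf^[n] z) ≤ εX') ∧
          (∀ n : ℕ, dX (Sb^[n] y) (Sb^[n] z) ≤ εX')) := by
  rintro ⟨εX, εX', lam, hεX, hεX', -, -, -, -, h3⟩
  rcases le_or_gt 1 εX' with hbig | hsmall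
  · -- Case εX' ≥ 1 : uniqueness fails at the fixed point 0
    set x0 : XShift := ⟨fun _ => 0, Or.inl (fun _ => fin02)⟩ with hx0
    set z1 : XShift := ⟨fun n => if n = 0 then 1 else 0,
      Or.inl (fun n => by dsimp only; split; exacts [fin12, fin02])⟩ with hz1
    obtain ⟨z, -, huniq⟩ := h3 x0 x0 (by rw [dX_eq_zero x0 x0 (fun _ => rfl)]; exact hεX.le)
    have hx0z : x0 = z := by
      apply huniq
      refine ⟨fun n => ?_, fun n => ?_⟩ <;>
        · rw [dX_eq_zero _ _ (fun m => rfl)]; exact hεX'.le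
    have hz1z : z1 = z := by
      apply huniq
      constructor
      · intro n
        have hd : dX (Sf^[n] x0) (Sf^[n] z1) =
            (2:ℝ)⁻¹ ^ (-(n:ℤ)).natAbs *
              (if (Sf^[n] x0).1 (-(n:ℤ)) = (Sf^[n] z1).1 (-(n:ℤ)) then 0 else 1) := by
          apply dX_eq_single
          intro m hm
          rw [sf_iter, sf_iter]
          have : m + (n:ℤ) ≠ 0 := fun h => hm (by linarith)
          simp [hx0, hz1, this]
        rw [hd]
        calc (2:ℝ)⁻¹ ^ (-(n:ℤ)).natAbs * _ ≤ 1 :=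
              mul_le_one₀ (pow_le_one₀ (by norm_num) (by norm_num))
                (by split <;> norm_num) (by split <;> norm_num)
          _ ≤ εX' := hbig
      · intro n
        have hd : dX (Sb^[n] x0) (Sb^[n] z1) =
            (2:ℝ)⁻¹ ^ ((n:ℤ)).natAbs *
              (if (Sb^[n] x0).1 ((n:ℤ)) = (Sb^[n] z1).1 ((n:ℤ)) then 0 else 1) := by
          apply dX_eq_single
          intro m hm
          rw [sb_iter, sb_iter]
          have : m - (n:ℤ) ≠ 0 := fun h => hm (by linarith)
          simp [hx0, hz1, this]
        rw [hd]
        calc (2:ℝ)⁻¹ ^ ((n:ℤ)).natAbs * _ ≤ 1 :=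
              mul_le_one₀ (pow_le_one₀ (by norm_num) (by norm_num))
                (by split <;> norm_num) (by split <;> norm_num)
          _ ≤ εX' := hbig
    have : x0 = z1 := hx0z.trans hz1z.symm
    have h0 : x0.1 0 = z1.1 0 := by rw [this]
    simp [hx0, hz1] at h0
  · -- Case εX' < 1
    obtain ⟨n0, hn0⟩ := exists_pow_lt_of_lt_one (half_pos hεX) (by norm_num : (2:ℝ)⁻¹ < 1)
    set N : ℕ := max n0 1 with hN
    have hN1 : 1 ≤ N := le_max_right _ _
    have hNpow : (2:ℝ)⁻¹ ^ N ≤ (2:ℝ)⁻¹ ^ n0 :=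
      pow_le_pow_of_le_one (by norm_num) (by norm_num) (le_max_left _ _)
    have hNεX : 2 * (2:ℝ)⁻¹ ^ N ≤ εX := by nlinarith
    have hNne : (N:ℤ) ≠ -(N:ℤ) := by
      intro h
      have : (N:ℤ) = 0 := by linarith
      omega
    set x : XShift := ⟨fun m => if m = (N:ℤ) then 1 else 0,
      Or.inl (fun n => by dsimp only; split; exacts [fin12, fin02])⟩ with hx
    set y : XShift := ⟨fun m => if m = -(N:ℤ) then 2 else 0,
      Or.inr (fun n => by dsimp only; split; exacts [fin21, fin01])⟩ with hy
    have hdxy : dX x y ≤ εX := by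
      have : dX x y = ∑ n ∈ ({(N:ℤ), -(N:ℤ)} : Finset ℤ),
          (2:ℝ)⁻¹ ^ n.natAbs * (if x.1 n = y.1 n then 0 else 1) := by
        unfold dX
        apply tsum_eq_sum
        intro b hb
        simp only [Finset.mem_insert, Finset.mem_singleton, not_or] at hb
        simp [hx, hy, hb.1, hb.2]
      rw [this, Finset.sum_pair hNne]
      have e1 : x.1 (N:ℤ) = 1 := by simp [hx]
      have e2 : y.1 (N:ℤ) = 0 := by simp [hy, hNne]
      have e3 : x.1 (-(N:ℤ)) = 0 := by simp [hx, Ne.symm hNne]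
      have e4 : y.1 (-(N:ℤ)) = 2 := by simp [hy]
      rw [e1, e2, e3, e4]
      norm_num [Int.natAbs_neg, fin02, fin01.symm]
      linarith
    obtain ⟨z, ⟨hzs, hzu⟩, -⟩ := h3 x y hdxy
    -- forward: z.1 N = 1
    have hfx : (Sf^[N] x).1 0 = 1 := by rw [sf_iter]; simp [hx]
    have hzN : z.1 (N:ℤ) = 1 := by
      by_contra hne
      have hterm := term_le_dX (Sf^[N] x) (Sf^[N] z) 0
      have hne' : (Sf^[N] x).1 0 ≠ (Sf^[N] z).1 0 := by
        rw [hfx, sf_iter]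
        simpa using Ne.symm hne
      rw [if_neg hne'] at hterm
      simp at hterm
      have := hzs N
      linarith
    -- backward: z.1 (-N) = 2
    have hby : (Sb^[N] y).1 0 = 2 := by rw [sb_iter]; simp [hy]
    have hzN' : z.1 (-(N:ℤ)) = 2 := by
      by_contra hne
      have hterm := term_le_dX (Sb^[N] y) (Sb^[N] z) 0
      have hne' : (Sb^[N] y).1 0 ≠ (Sb^[N] z).1 0 := by
        rw [hby, sb_iter]
        simpa using Ne.symm hne
      rw [if_neg hne'] at hterm
      simp at hterm
      have := hzu N
      linarith
    rcases z.2 with h | h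
    · exact h _ hzN'
    · exact h _ hzN
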